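/- For σ > 0, the infimum over ω > 0 of (1 − e^{−2ωσ})/(2ω²e^{−2ωσ}) equals 2σ²·(1 − e^{−c})/(c²e^{−c}) where c = 2 + W(−2e^{−2}), and this infimum times the Cauchy Fisher information 1/(2σ²) is strictly greater than 1. -/

import Mathlib

open Set Real

/-!
Substituting `t = 2ωσ` turns the objective into `2σ² g(t)` with `g(t) = (eᵗ - 1)/t²`, whose
derivative is `h(t)/t³` for `h(t) = (t - 2)eᵗ + 2`. Since `h(0) = 0`, `h` decreases on `[0, 1]`
and increases on `[1, ∞)`, `g` is minimized over `t > 0` at the root `c > 1` of `h`; the Lambert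
equation for `w` says exactly that `c = 2 + w` is a root of `h`, and `w ≥ -1` excludes the
root `0`. At `c`, `eᶜ = 2/(2 - c)`, so `g(c) = 1/(c(2 - c)) = 1/(1 - (c - 1)²) > 1`.
-/

noncomputable def expSubOneDivSq (t : ℝ) : ℝ := (exp t - 1) / t ^ 2

lemma hasDerivAt_sub_two_mul_exp_add_two (t : ℝ) :
    HasDerivAt (fun x ↦ (x - 2) * exp x + 2) ((t - 1) * exp t) t := by
  refine ((((hasDerivAt_id t).sub_const 2).fun_mul (hasDerivAt_exp t)).add_const 2).congr_deriv ?_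
  simp only [id_eq]
  ring

lemma strictAntiOn_sub_two_mul_exp_add_two :
    StrictAntiOn (fun x ↦ (x - 2) * exp x + 2) (Iic 1) := by
  refine strictAntiOn_of_hasDerivWithinAt_neg (convex_Iic 1) (by fun_prop)
    (fun t _ ↦ (hasDerivAt_sub_two_mul_exp_add_two t).hasDerivWithinAt) fun t ht ↦ ?_
  rw [interior_Iic] at ht
  exact mul_neg_of_neg_of_pos (sub_neg.2 ht) (exp_pos t)

lemma strictMonoOn_sub_two_mul_exp_add_two :
    StrictMonoOn (fun x ↦ (x - 2) * exp x + 2) (Ici 1) := by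
  refine strictMonoOn_of_hasDerivWithinAt_pos (convex_Ici 1) (by fun_prop)
    (fun t _ ↦ (hasDerivAt_sub_two_mul_exp_add_two t).hasDerivWithinAt) fun t ht ↦ ?_
  rw [interior_Ici] at ht
  exact mul_pos (sub_pos.2 ht) (exp_pos t)

section Stationary

variable {c t : ℝ}

lemma sub_two_mul_exp_add_two_neg (hc : (c - 2) * exp c + 2 = 0) (hc1 : 1 < c)
    (ht : t ∈ Ioo 0 c) : (t - 2) * exp t + 2 < 0 := by
  rcases le_or_gt t 1 with ht1 | ht1
  · simpa using
      strictAntiOn_sub_two_mul_exp_add_two (show (0 : ℝ) ∈ Iic 1 by norm_num) ht1 ht.1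
  · simpa [hc] using strictMonoOn_sub_two_mul_exp_add_two ht1.le hc1.le ht.2

lemma sub_two_mul_exp_add_two_pos (hc : (c - 2) * exp c + 2 = 0) (hc1 : 1 ≤ c)
    (ht : c < t) : 0 < (t - 2) * exp t + 2 := by
  simpa [hc] using strictMonoOn_sub_two_mul_exp_add_two hc1 (hc1.trans ht.le) ht

lemma hasDerivAt_expSubOneDivSq (ht : t ≠ 0) :
    HasDerivAt expSubOneDivSq (((t - 2) * exp t + 2) / t ^ 3) t := by
  have hsq : HasDerivAt (fun x : ℝ ↦ x ^ 2) (2 * t) t := by simpa using hasDerivAt_pow 2 t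
  refine (((hasDerivAt_exp t).sub_const 1).fun_div hsq (pow_ne_zero 2 ht)).congr_deriv ?_
  field_simp
  ring

lemma continuousWithinAt_expSubOneDivSq (s : Set ℝ) (ht : t ≠ 0) :
    ContinuousWithinAt expSubOneDivSq s t :=
  (hasDerivAt_expSubOneDivSq ht).continuousAt.continuousWithinAt

lemma antitoneOn_expSubOneDivSq (hc : (c - 2) * exp c + 2 = 0) (hc1 : 1 < c) :
    AntitoneOn expSubOneDivSq (Ioc 0 c) := by
  refine antitoneOn_of_hasDerivWithinAt_nonpos (convex_Ioc 0 c)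
    (f' := fun t ↦ ((t - 2) * exp t + 2) / t ^ 3)
    (fun t ht ↦ continuousWithinAt_expSubOneDivSq _ ht.1.ne') (fun t ht ↦ ?_) fun t ht ↦ ?_
  all_goals rw [interior_Ioc] at ht
  · exact (hasDerivAt_expSubOneDivSq ht.1.ne').hasDerivWithinAt
  · exact div_nonpos_of_nonpos_of_nonneg (sub_two_mul_exp_add_two_neg hc hc1 ht).le
      (pow_pos ht.1 3).le

lemma monotoneOn_expSubOneDivSq (hc : (c - 2) * exp c + 2 = 0) (hc1 : 1 ≤ c) :
    MonotoneOn expSubOneDivSq (Ici c) := by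
  have hpos : ∀ {t : ℝ}, c ≤ t → 0 < t := fun ht ↦ zero_lt_one.trans_le (hc1.trans ht)
  refine monotoneOn_of_hasDerivWithinAt_nonneg (convex_Ici c)
    (f' := fun t ↦ ((t - 2) * exp t + 2) / t ^ 3)
    (fun t ht ↦ continuousWithinAt_expSubOneDivSq _ (hpos ht).ne')
    (fun t ht ↦ ?_) fun t ht ↦ ?_
  all_goals rw [interior_Ici] at ht
  · exact (hasDerivAt_expSubOneDivSq (hpos (le_of_lt ht)).ne').hasDerivWithinAt
  · exact div_nonneg (sub_two_mul_exp_add_two_pos hc hc1 ht).le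
      (pow_pos (hpos (le_of_lt ht)) 3).le

lemma isMinOn_expSubOneDivSq (hc : (c - 2) * exp c + 2 = 0) (hc1 : 1 < c) :
    IsMinOn expSubOneDivSq (Ioi 0) c :=
  isMinOn_Ioi_of_anti_mono (antitoneOn_expSubOneDivSq hc hc1) (monotoneOn_expSubOneDivSq hc hc1.le)

lemma one_lt_expSubOneDivSq (hc : (c - 2) * exp c + 2 = 0) (hc1 : 1 < c) :
    1 < expSubOneDivSq c := by
  have hc2 : c < 2 := by nlinarith [exp_pos c]
  have hval : expSubOneDivSq c = 1 / (c * (2 - c)) := by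
    have hexp : exp c = 2 / (2 - c) := by
      rw [eq_div_iff (sub_ne_zero.2 hc2.ne')]
      linarith
    rw [expSubOneDivSq, hexp]
    field_simp [sub_ne_zero.2 hc2.ne']
    ring
  rw [hval]
  exact one_lt_one_div (by nlinarith) (by nlinarith)

end Stationary

lemma sub_two_mul_exp_add_two_eq_zero_of_lambert {w : ℝ}
    (hw : w * exp w = -2 * exp (-2)) : (2 + w - 2) * exp (2 + w) + 2 = 0 := by
  rw [add_sub_cancel_left, exp_add, mul_left_comm, hw, mul_left_comm, ← exp_add]
  norm_num

lemma one_lt_two_add_of_lambert {w : ℝ} (hw : w * exp w = -2 * exp (-2)) (hw1 : -1 ≤ w) :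
    1 < 2 + w := by
  refine lt_of_le_of_ne (by linarith) fun h ↦ ?_
  have hw' := sub_two_mul_exp_add_two_eq_zero_of_lambert hw
  rw [← h] at hw'
  norm_num at hw'
  linarith [exp_one_gt_d9]

lemma one_sub_exp_neg_div_mul_exp_neg (t k : ℝ) :
    (1 - exp (-t)) / (k * exp (-t)) = (exp t - 1) / k := by
  rw [exp_neg]
  field_simp [exp_ne_zero t]

lemma power_constraint_objective_eq {σ : ℝ} (hσ : σ ≠ 0) (ω : ℝ) :
    (1 - exp (-2 * ω * σ)) / (2 * ω ^ 2 * exp (-2 * ω * σ))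
      = 2 * σ ^ 2 * expSubOneDivSq (2 * ω * σ) := by
  rw [show -2 * ω * σ = -(2 * ω * σ) by ring, one_sub_exp_neg_div_mul_exp_neg, expSubOneDivSq]
  field_simp

/-- Cauchy noise, per-sensor power constraint: the infimum over `ω > 0` of
`(1 − e^{−2ωσ})/(2ω²e^{−2ωσ})` equals `2σ²(1 − e^{−c})/(c²e^{−c})` with
`c = 2 + W(−2e^{−2})` (`W` the principal Lambert W branch, characterized by
`w·e^w = −2e^{−2}`, `w ≥ −1`), and this infimum times the Cauchy Fisher
information `1/(2σ²)` is strictly greater than `1` (no asymptotic efficiency). -/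
theorem cauchy_are_gt_one (σ : ℝ) (hσ : 0 < σ) (w : ℝ)
    (hw : w * Real.exp w = -2 * Real.exp (-2)) (hw1 : -1 ≤ w) :
    IsLeast ((fun ω : ℝ =>
        (1 - Real.exp (-2 * ω * σ)) / (2 * ω^2 * Real.exp (-2 * ω * σ))) ''
        Set.Ioi 0)
      (2 * σ^2 * (1 - Real.exp (-(2 + w))) / ((2 + w)^2 * Real.exp (-(2 + w)))) ∧
    1 < (2 * σ^2 * (1 - Real.exp (-(2 + w))) / ((2 + w)^2 * Real.exp (-(2 + w)))) *
      (1 / (2 * σ^2)) := by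
  have hc := sub_two_mul_exp_add_two_eq_zero_of_lambert hw
  have hc1 := one_lt_two_add_of_lambert hw hw1
  have hval : 2 * σ ^ 2 * (1 - exp (-(2 + w))) / ((2 + w) ^ 2 * exp (-(2 + w)))
      = 2 * σ ^ 2 * expSubOneDivSq (2 + w) := by
    rw [mul_div_assoc, one_sub_exp_neg_div_mul_exp_neg, expSubOneDivSq]
  simp only [hval, power_constraint_objective_eq hσ.ne']
  have hω : 0 < (2 + w) / (2 * σ) := div_pos (by linarith) (by positivity)
  refine ⟨⟨⟨(2 + w) / (2 * σ), hω, ?_⟩, ?_⟩, ?_⟩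
  · field_simp
  · rintro _ ⟨ω, hω, rfl⟩
    exact mul_le_mul_of_nonneg_left
      (isMinOn_expSubOneDivSq hc hc1 (by have := mem_Ioi.1 hω; positivity : 0 < 2 * ω * σ))
      (by positivity)
  · field_simp
    exact one_lt_expSubOneDivSq hc hc1
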